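/- Let X ∈ ℝ^{N×D} have full column rank D, Y ∈ ℝ^{N×C}, 1 ≤ K ≤ D, and assume the eigenvalues λ_1 ≥ λ_2 ≥ … of YYᵀ satisfy λ_K > Σ_{i>K} λ_i and that the top-K eigenspace S of YYᵀ is contained in the column space of X. Then for every global minimizer (V*, W*) of (V, W) ↦ ‖XVW − Y‖_F² over V ∈ ℝ^{D×K}, W ∈ ℝ^{K×C} that additionally satisfies the normalization (V*)ᵀXᵀXV* = I_K, the matrix Z := XV* satisfies ZZᵀ = Π_S, the orthogonal projection matrix onto S; in particular ZZᵀ equals Σ_{k=1}^K v_k v_kᵀ for any orthonormal eigenvectors v_1, …, v_K of YYᵀ associated with its K largest eigenvalues. -/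

import Mathlib

open Matrix BigOperators

noncomputable section

/-- Squared Frobenius norm of a real matrix. -/
def frobSq {m n : Type*} [Fintype m] [Fintype n] (M : Matrix m n ℝ) : ℝ :=
  ∑ i, ∑ j, (M i j) ^ 2

/-- `AᵀA` is Hermitian over `ℝ`. -/
theorem isHermitian_tmul {m n : ℕ} (A : Matrix (Fin m) (Fin n) ℝ) :
    (Aᵀ * A).IsHermitian := by
  simpa [Matrix.conjTranspose_eq_transpose_of_trivial] using
    Matrix.isHermitian_conjTranspose_mul_self A

/-- `AAᵀ` is Hermitian over `ℝ`. -/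
theorem isHermitian_mult {m n : ℕ} (A : Matrix (Fin m) (Fin n) ℝ) :
    (A * Aᵀ).IsHermitian := by
  simpa [Matrix.conjTranspose_eq_transpose_of_trivial] using
    Matrix.isHermitian_mul_conjTranspose_self A

/-- The `i`-th eigenvalue of a real symmetric (Hermitian) matrix, in decreasing order
(`eigDesc hM 0` is the largest eigenvalue, counted with multiplicity). -/
def eigDesc {n : ℕ} {M : Matrix (Fin n) (Fin n) ℝ} (hM : M.IsHermitian) (i : Fin n) : ℝ :=
  hM.eigenvalues (Tuple.sort hM.eigenvalues i.rev)

/-- Sum of the `K` largest eigenvalues of a Hermitian matrix. -/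
def sumTopEig {n : ℕ} {M : Matrix (Fin n) (Fin n) ℝ} (hM : M.IsHermitian) (K : ℕ) : ℝ :=
  ∑ i : Fin n, if (i : ℕ) < K then eigDesc hM i else 0

/-- Sum of the eigenvalues of a Hermitian matrix after the `K` largest ones. -/
def sumTailEig {n : ℕ} {M : Matrix (Fin n) (Fin n) ℝ} (hM : M.IsHermitian) (K : ℕ) : ℝ :=
  ∑ i : Fin n, if K ≤ (i : ℕ) then eigDesc hM i else 0

/-- Top-`K` eigenspace of a Hermitian matrix: the sum of the eigenspaces associated with
its `K` largest eigenvalues. -/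
def topEigSpace {n : ℕ} {M : Matrix (Fin n) (Fin n) ℝ} (hM : M.IsHermitian) (K : ℕ) :
    Submodule ℝ (Fin n → ℝ) :=
  ⨆ i : {i : Fin n // (i : ℕ) < K},
    LinearMap.ker (M.mulVecLin - eigDesc hM i.1 • LinearMap.id)

/-- Ordinary least squares prediction of `Y` from `X`. -/
def ols {N D C : ℕ} (X : Matrix (Fin N) (Fin D) ℝ) (Y : Matrix (Fin N) (Fin C) ℝ) :
    Matrix (Fin N) (Fin C) ℝ :=
  X * (Xᵀ * X)⁻¹ * Xᵀ * Y

/-! Write `Z = XV*` (orthonormal columns) and `A = YYᵀ`. For orthonormal `Z` the least-squares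
residual is at least `‖Y‖² - tr(ZᵀAZ)`, with equality at `W = ZᵀY`. Since the top-`K`
eigenvectors of `A` lie in the column space of `X`, a normalized minimizer must therefore
satisfy `tr(ZᵀAZ) ≥ λ₁ + ⋯ + λ_K`, i.e. attain Ky Fan's bound. Expanding `Z` in a sorted
orthonormal eigenbasis `U`, the squared norms of the rows of `UᵀZ` are weights in `[0, 1]` of
total mass `K`; the eigengap `λ_{K+1} ≤ Σ_{i>K} λ_i < λ_K` (the eigenvalues are nonnegative)
forces all weight onto the top `K` eigenvectors, so `range Z` is the top-`K` eigenspace, which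
the gap also makes `K`-dimensional. A symmetric idempotent matrix is determined by its range,
so `ZZᵀ = PPᵀ` for every orthonormal top-`K` eigenvector matrix `P`. -/

/-- Equality case of the bathtub principle. -/
theorem eq_zero_of_sum_le_sum_mul {ι : Type*} [Fintype ι] [DecidableEq ι] (top : Finset ι)
    (μ s : ι → ℝ) (c : ℝ) (hs0 : ∀ i, 0 ≤ s i) (hs1 : ∀ i, s i ≤ 1)
    (hs : ∑ i, s i = top.card) (htop : ∀ i ∈ top, c ≤ μ i) (htail : ∀ i ∉ top, μ i < c)
    (h : ∑ i ∈ top, μ i ≤ ∑ i, μ i * s i) {i : ι} (hi : i ∉ top) : s i = 0 := by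
  set f : ι → ℝ := fun j => if j ∈ top then (μ j - c) * (1 - s j) else (c - μ j) * s j
  have hf0 : ∀ j ∈ Finset.univ, 0 ≤ f j := fun j _ => by
    by_cases hj : j ∈ top
    · simpa [f, hj] using mul_nonneg (sub_nonneg.2 (htop j hj)) (sub_nonneg.2 (hs1 j))
    · simpa [f, hj] using mul_nonneg (sub_nonneg.2 (htail j hj).le) (hs0 j)
  -- the level `c` cancels out because `∑ s = top.card`
  have hf : ∑ j, f j = ∑ j ∈ top, μ j - ∑ j, μ j * s j := by
    have hsplit : ∀ j, f j = (if j ∈ top then μ j - c else 0) + (c * s j - μ j * s j) := by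
      intro j; by_cases hj : j ∈ top <;> simp [f, hj] <;> ring
    simp only [hsplit, Finset.sum_add_distrib, Finset.sum_sub_distrib, ← Finset.mul_sum, hs,
      ← Finset.sum_filter, Finset.filter_mem_eq_inter, Finset.univ_inter, Finset.sum_const,
      nsmul_eq_mul]
    ring
  have hfi : f i = 0 :=
    (Finset.sum_eq_zero_iff_of_nonneg hf0).1 (le_antisymm (by linarith) (Finset.sum_nonneg hf0))
      i (Finset.mem_univ i)
  simp only [f, hi, if_false, mul_eq_zero] at hfi
  exact hfi.resolve_left (sub_ne_zero.2 (htail i hi).ne')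

theorem Fin.sum_ite_val_lt_eq_sum_castLE {M : Type*} [AddCommMonoid M] {K n : ℕ} (hKn : K ≤ n)
    (f : Fin n → M) :
    ∑ i : Fin n, (if (i : ℕ) < K then f i else 0) = ∑ j : Fin K, f (Fin.castLE hKn j) := by
  rw [← Finset.sum_filter]
  refine Eq.trans ?_ (Finset.sum_map Finset.univ (Fin.castLEEmb hKn) f)
  congr 1
  ext i
  simp only [Finset.mem_filter, Finset.mem_univ, true_and, Finset.mem_map, Fin.castLEEmb_apply]
  exact ⟨fun h => ⟨⟨i, h⟩, rfl⟩, by rintro ⟨j, rfl⟩; exact j.isLt⟩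

section Frobenius

variable {m k c : Type*} [Fintype m] [Fintype k] [Fintype c]

theorem frobSq_eq_trace (M : Matrix m c ℝ) : frobSq M = (Mᵀ * M).trace := by
  simp only [frobSq, trace, diag, mul_apply, transpose_apply, sq]
  exact Finset.sum_comm

theorem frobSq_nonneg (M : Matrix m c ℝ) : 0 ≤ frobSq M :=
  Finset.sum_nonneg fun _ _ => Finset.sum_nonneg fun _ _ => sq_nonneg _

theorem frobSq_mul_sub_eq [DecidableEq k] {Z : Matrix m k ℝ} (hZ : Zᵀ * Z = 1)
    (Y : Matrix m c ℝ) (W : Matrix k c ℝ) :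
    frobSq (Z * W - Y) = frobSq (W - Zᵀ * Y) + frobSq Y - (Zᵀ * (Y * Yᵀ) * Z).trace := by
  have hZW : Zᵀ * (Z * W) = W := by rw [← Matrix.mul_assoc, hZ, Matrix.one_mul]
  have hgram : (Z * W - Y)ᵀ * (Z * W - Y)
      = (W - Zᵀ * Y)ᵀ * (W - Zᵀ * Y) + Yᵀ * Y - (Zᵀ * Y)ᵀ * (Zᵀ * Y) := by
    simp only [transpose_sub, transpose_mul, transpose_transpose, Matrix.sub_mul, Matrix.mul_sub,
      Matrix.mul_assoc, hZW]
    abel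
  have htrace : ((Zᵀ * Y)ᵀ * (Zᵀ * Y)).trace = (Zᵀ * (Y * Yᵀ) * Z).trace := by
    rw [transpose_mul, transpose_transpose, trace_mul_comm]
    simp only [Matrix.mul_assoc]
  rw [frobSq_eq_trace, frobSq_eq_trace, frobSq_eq_trace, hgram, trace_sub, trace_add, htrace]

theorem trace_le_of_frobSq_le [DecidableEq k] {Z P : Matrix m k ℝ} (hZ : Zᵀ * Z = 1)
    (hP : Pᵀ * P = 1) {Y : Matrix m c ℝ} {W : Matrix k c ℝ}
    (h : frobSq (Z * W - Y) ≤ frobSq (P * (Pᵀ * Y) - Y)) :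
    (Pᵀ * (Y * Yᵀ) * P).trace ≤ (Zᵀ * (Y * Yᵀ) * Z).trace := by
  rw [frobSq_mul_sub_eq hZ, frobSq_mul_sub_eq hP, sub_self] at h
  have hzero : frobSq (0 : Matrix k c ℝ) = 0 := by simp [frobSq]
  linarith [frobSq_nonneg (W - Zᵀ * Y)]

end Frobenius

namespace Matrix

section Projection

theorem range_mulVecLin_mul_le {m n o : Type*} [Fintype n] [Fintype o] (M : Matrix m n ℝ)
    (N : Matrix n o ℝ) :
    LinearMap.range (M * N).mulVecLin ≤ LinearMap.range M.mulVecLin := by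
  rw [mulVecLin_mul]
  exact LinearMap.range_comp_le_range _ _

variable {m n : Type*} [Fintype m] [Fintype n] [DecidableEq n]

theorem mulVecLin_injective_of_transpose_mul_self_eq_one {P : Matrix m n ℝ} (hP : Pᵀ * P = 1) :
    Function.Injective P.mulVecLin := by
  intro v w h
  have h' := congrArg (Pᵀ *ᵥ ·) h
  simpa only [mulVecLin_apply, mulVec_mulVec, hP, one_mulVec] using h'

theorem finrank_range_mulVecLin_of_transpose_mul_self_eq_one {P : Matrix m n ℝ}
    (hP : Pᵀ * P = 1) : Module.finrank ℝ (LinearMap.range P.mulVecLin) = Fintype.card n := by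
  rw [LinearMap.finrank_range_of_inj (mulVecLin_injective_of_transpose_mul_self_eq_one hP),
    Module.finrank_fintype_fun_eq_card]

theorem range_mulVecLin_mul_transpose_self {P : Matrix m n ℝ} (hP : Pᵀ * P = 1) :
    LinearMap.range (P * Pᵀ).mulVecLin = LinearMap.range P.mulVecLin := by
  refine le_antisymm (range_mulVecLin_mul_le P Pᵀ) ?_
  rintro _ ⟨w, rfl⟩
  exact ⟨P *ᵥ w, by
    simp only [mulVecLin_apply, mulVec_mulVec, Matrix.mul_assoc, hP, Matrix.mul_one]⟩

theorem mul_eq_right_of_range_le [DecidableEq m] {M N : Matrix m m ℝ} (hM : IsIdempotentElem M)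
    (h : LinearMap.range N.mulVecLin ≤ LinearMap.range M.mulVecLin) : M * N = N := by
  refine mulVec_injective (funext fun v => ?_)
  obtain ⟨w, hw⟩ := h ⟨v, rfl⟩
  simp only [mulVecLin_apply] at hw
  rw [← mulVec_mulVec, ← hw, mulVec_mulVec, hM.eq]

theorem eq_of_range_mulVecLin_eq [DecidableEq m] {M N : Matrix m m ℝ} (hMs : Mᵀ = M)
    (hNs : Nᵀ = N) (hM : IsIdempotentElem M) (hN : IsIdempotentElem N)
    (h : LinearMap.range M.mulVecLin = LinearMap.range N.mulVecLin) : M = N := by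
  have hMN : M * N = N := mul_eq_right_of_range_le hM h.ge
  have hNM : N * M = M := mul_eq_right_of_range_le hN h.le
  calc M = N * M := hNM.symm
    _ = (M * N)ᵀ := by rw [transpose_mul, hMs, hNs]
    _ = N := by rw [hMN, hNs]

theorem isIdempotentElem_mul_transpose_self {P : Matrix m n ℝ}
    (hP : Pᵀ * P = 1) : IsIdempotentElem (P * Pᵀ) := by
  rw [IsIdempotentElem, Matrix.mul_assoc, ← Matrix.mul_assoc Pᵀ, hP, Matrix.one_mul]

theorem mul_transpose_self_eq_of_range_le [DecidableEq m] {P Q : Matrix m n ℝ}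
    (hP : Pᵀ * P = 1) (hQ : Qᵀ * Q = 1)
    (h : LinearMap.range P.mulVecLin ≤ LinearMap.range Q.mulVecLin) : P * Pᵀ = Q * Qᵀ := by
  refine eq_of_range_mulVecLin_eq (by simp) (by simp) (isIdempotentElem_mul_transpose_self hP)
    (isIdempotentElem_mul_transpose_self hQ) ?_
  rw [range_mulVecLin_mul_transpose_self hP, range_mulVecLin_mul_transpose_self hQ]
  refine Submodule.eq_of_le_of_finrank_le h ?_
  rw [finrank_range_mulVecLin_of_transpose_mul_self_eq_one hP,
    finrank_range_mulVecLin_of_transpose_mul_self_eq_one hQ]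

theorem diag_le_one_of_isIdempotentElem {M : Matrix m m ℝ} (hMs : Mᵀ = M)
    (hM : IsIdempotentElem M) (i : m) : M i i ≤ 1 := by
  have hsq : M i i = ∑ j, M i j ^ 2 := by
    conv_lhs => rw [← hM.eq]
    refine (mul_apply).trans (Finset.sum_congr rfl fun j _ => ?_)
    rw [sq, ← transpose_apply M j i, hMs]
  have hle : M i i ^ 2 ≤ M i i := hsq ▸ Finset.single_le_sum (fun j _ => sq_nonneg (M i j))
    (Finset.mem_univ i)
  nlinarith

theorem exists_mul_eq_of_range_le {m n k : Type*} [Fintype n] [Fintype k] [DecidableEq k]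
    {X : Matrix m n ℝ} {P : Matrix m k ℝ}
    (h : LinearMap.range P.mulVecLin ≤ LinearMap.range X.mulVecLin) :
    ∃ V : Matrix n k ℝ, X * V = P := by
  choose v hv using fun j : k => h ⟨Pi.single j 1, rfl⟩
  refine ⟨of fun d j => v j d, ?_⟩
  ext i j
  have hcol := congrFun (hv j) i
  rw [mulVecLin_apply, mulVecLin_apply, mulVec_single_one] at hcol
  simpa [mulVec, dotProduct, mul_apply] using hcol

end Projection

end Matrix

section SortedEigenbasis

variable {n : ℕ} {A : Matrix (Fin n) (Fin n) ℝ} (hA : A.IsHermitian)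

/-- The permutation with `eigDesc hA i = hA.eigenvalues (eigDescPerm hA i)`. -/
def eigDescPerm : Equiv.Perm (Fin n) :=
  Fin.revPerm.trans (Tuple.sort hA.eigenvalues)

def sortedEigenvectors : Matrix (Fin n) (Fin n) ℝ :=
  (hA.eigenvectorUnitary : Matrix (Fin n) (Fin n) ℝ).submatrix id (eigDescPerm hA)

theorem eigDesc_antitone : Antitone (eigDesc hA) := fun _ _ hij => by
  simpa [eigDesc] using Tuple.monotone_sort hA.eigenvalues (Fin.rev_le_rev.mpr hij)

theorem sortedEigenvectors_transpose_mul_self :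
    (sortedEigenvectors hA)ᵀ * sortedEigenvectors hA = 1 := by
  have hU := Matrix.mem_unitaryGroup_iff'.mp hA.eigenvectorUnitary.2
  rw [star_eq_conjTranspose, conjTranspose_eq_transpose_of_trivial] at hU
  rw [sortedEigenvectors, transpose_submatrix]
  refine (submatrix_mul_equiv _ _ _ (Equiv.refl _) _).trans ?_
  rw [hU, submatrix_one_equiv]

theorem sortedEigenvectors_mul_transpose_self :
    sortedEigenvectors hA * (sortedEigenvectors hA)ᵀ = 1 :=
  mul_eq_one_comm.mp (sortedEigenvectors_transpose_mul_self hA)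

theorem mulVec_sortedEigenvectors_col (j : Fin n) :
    A *ᵥ (fun i => sortedEigenvectors hA i j)
      = eigDesc hA j • fun i => sortedEigenvectors hA i j :=
  hA.mulVec_eigenvectorBasis (eigDescPerm hA j)

theorem sortedEigenvectors_transpose_mul :
    (sortedEigenvectors hA)ᵀ * A = diagonal (eigDesc hA) * (sortedEigenvectors hA)ᵀ := by
  ext j i
  have h := congrFun (mulVec_sortedEigenvectors_col hA j) i
  have hsymm : Aᵀ = A := (isHermitian_iff_isSymm.mp hA).eq
  simp only [mulVec, dotProduct, Pi.smul_apply, smul_eq_mul] at h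
  rw [mul_apply, diagonal_mul, transpose_apply, ← h]
  refine Finset.sum_congr rfl fun k _ => ?_
  rw [transpose_apply, mul_comm, ← transpose_apply A k i, hsymm]

end SortedEigenbasis

section TopEigenvectors

variable {n K : ℕ} {A : Matrix (Fin n) (Fin n) ℝ} (hA : A.IsHermitian)

theorem sumTopEig_eq_sum_castLE (hKn : K ≤ n) :
    sumTopEig hA K = ∑ j : Fin K, eigDesc hA (Fin.castLE hKn j) :=
  Fin.sum_ite_val_lt_eq_sum_castLE hKn _

theorem eigDesc_lt_of_sumTailEig_lt (h0 : ∀ i, 0 ≤ hA.eigenvalues i) {c : ℝ}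
    (hc : sumTailEig hA K < c) {i : Fin n} (hi : K ≤ (i : ℕ)) : eigDesc hA i < c := by
  refine lt_of_le_of_lt ?_ hc
  have hterm : ∀ j : Fin n, j ∈ Finset.univ → 0 ≤ if K ≤ (j : ℕ) then eigDesc hA j else 0 := by
    intro j _
    split_ifs
    exacts [h0 _, le_rfl]
  simpa [sumTailEig, hi] using Finset.single_le_sum hterm (Finset.mem_univ i)

theorem range_mulVecLin_le_topEigSpace (hKn : K ≤ n) {P : Matrix (Fin n) (Fin K) ℝ}
    (heig : ∀ j : Fin K, A *ᵥ (fun i => P i j)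
      = eigDesc hA (Fin.castLE hKn j) • fun i => P i j) :
    LinearMap.range P.mulVecLin ≤ topEigSpace hA K := by
  rintro _ ⟨w, rfl⟩
  have hcols : P *ᵥ w = ∑ j, w j • fun i => P i j := by
    ext i
    simp [mulVec, dotProduct, Finset.sum_apply, mul_comm]
  rw [mulVecLin_apply, hcols]
  refine Submodule.sum_mem _ fun j _ => Submodule.smul_mem _ _ ?_
  refine Submodule.mem_iSup_of_mem (⟨Fin.castLE hKn j, j.isLt⟩ : {i : Fin n // (i : ℕ) < K}) ?_
  simp [heig j]

theorem trace_transpose_mul_mul_eq_sumTopEig (hKn : K ≤ n) {P : Matrix (Fin n) (Fin K) ℝ}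
    (hP : Pᵀ * P = 1)
    (heig : ∀ j : Fin K, A *ᵥ (fun i => P i j)
      = eigDesc hA (Fin.castLE hKn j) • fun i => P i j) :
    (Pᵀ * A * P).trace = sumTopEig hA K := by
  rw [sumTopEig_eq_sum_castLE hA hKn, trace, Matrix.mul_assoc]
  refine Finset.sum_congr rfl fun j _ => ?_
  have hAP : ∀ i, (A * P) i j = eigDesc hA (Fin.castLE hKn j) * P i j := fun i => by
    simpa [mulVec, dotProduct, mul_apply] using congrFun (heig j) i
  have hunit : ∑ i, P i j * P i j = 1 := by
    simpa [mul_apply] using congrFun (congrFun hP j) j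
  rw [diag_apply, mul_apply]
  simp only [transpose_apply, hAP]
  calc ∑ i, P i j * (eigDesc hA (Fin.castLE hKn j) * P i j)
      = eigDesc hA (Fin.castLE hKn j) * ∑ i, P i j * P i j := by
        rw [Finset.mul_sum]
        exact Finset.sum_congr rfl fun i _ => by ring
    _ = eigDesc hA (Fin.castLE hKn j) := by rw [hunit, mul_one]

def topEigenvectors (hKn : K ≤ n) : Matrix (Fin n) (Fin K) ℝ :=
  (sortedEigenvectors hA).submatrix id (Fin.castLE hKn)

theorem topEigenvectors_transpose_mul_self (hKn : K ≤ n) :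
    (topEigenvectors hA hKn)ᵀ * topEigenvectors hA hKn = 1 := by
  rw [topEigenvectors, transpose_submatrix]
  refine (submatrix_mul_equiv _ _ _ (Equiv.refl _) _).trans ?_
  rw [sortedEigenvectors_transpose_mul_self, submatrix_one _ (Fin.castLE_injective hKn)]

theorem mulVec_topEigenvectors_col (hKn : K ≤ n) (j : Fin K) :
    A *ᵥ (fun i => topEigenvectors hA hKn i j)
      = eigDesc hA (Fin.castLE hKn j) • fun i => topEigenvectors hA hKn i j :=
  mulVec_sortedEigenvectors_col hA _

theorem mem_range_topEigenvectors (hKn : K ≤ n) {v : Fin n → ℝ}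
    (hv : ∀ i : Fin n, K ≤ (i : ℕ) → ((sortedEigenvectors hA)ᵀ *ᵥ v) i = 0) :
    v ∈ LinearMap.range (topEigenvectors hA hKn).mulVecLin := by
  set U := sortedEigenvectors hA
  refine ⟨fun j => (Uᵀ *ᵥ v) (Fin.castLE hKn j), ?_⟩
  calc (topEigenvectors hA hKn).mulVecLin (fun j => (Uᵀ *ᵥ v) (Fin.castLE hKn j))
      = U *ᵥ (Uᵀ *ᵥ v) := by
        ext i
        rw [mulVecLin_apply, mulVec, dotProduct, mulVec, dotProduct]
        refine (Fin.sum_ite_val_lt_eq_sum_castLE hKn fun m => U i m * (Uᵀ *ᵥ v) m).symm.trans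
          (Finset.sum_congr rfl fun m _ => ?_)
        split_ifs with hm
        · rfl
        · rw [hv m (not_lt.mp hm), mul_zero]
    _ = v := by rw [mulVec_mulVec, sortedEigenvectors_mul_transpose_self, one_mulVec]

end TopEigenvectors

section EigenGap

variable {n K : ℕ} {A : Matrix (Fin n) (Fin n) ℝ} (hA : A.IsHermitian)

theorem sortedEigenvectors_transpose_mulVec_eq_zero {v : Fin n → ℝ} {μ : ℝ}
    (hv : A *ᵥ v = μ • v) {i : Fin n} (hi : eigDesc hA i ≠ μ) :
    ((sortedEigenvectors hA)ᵀ *ᵥ v) i = 0 := by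
  have h : (sortedEigenvectors hA)ᵀ *ᵥ (A *ᵥ v) = (sortedEigenvectors hA)ᵀ *ᵥ (μ • v) := by
    rw [hv]
  rw [mulVec_mulVec, sortedEigenvectors_transpose_mul, ← mulVec_mulVec, mulVec_smul] at h
  replace h := congrFun h i
  rw [mulVec_diagonal, Pi.smul_apply, smul_eq_mul] at h
  exact (mul_eq_zero.mp (sub_mul (eigDesc hA i) μ _ ▸ sub_eq_zero.mpr h)).resolve_left
    (sub_ne_zero.mpr hi)

theorem trace_transpose_mul_mul_eq_sum (Z : Matrix (Fin n) (Fin K) ℝ) :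
    (Zᵀ * A * Z).trace = ∑ i, eigDesc hA i *
      (((sortedEigenvectors hA)ᵀ * Z) * ((sortedEigenvectors hA)ᵀ * Z)ᵀ) i i := by
  set U := sortedEigenvectors hA
  have hconj : Zᵀ * A * Z = (Uᵀ * Z)ᵀ * (diagonal (eigDesc hA) * (Uᵀ * Z)) :=
    calc Zᵀ * A * Z = Zᵀ * (U * Uᵀ) * A * Z := by
          rw [sortedEigenvectors_mul_transpose_self, Matrix.mul_one]
      _ = (Uᵀ * Z)ᵀ * (Uᵀ * A * Z) := by
          simp only [transpose_mul, transpose_transpose, Matrix.mul_assoc]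
      _ = (Uᵀ * Z)ᵀ * (diagonal (eigDesc hA) * (Uᵀ * Z)) := by
          rw [sortedEigenvectors_transpose_mul, Matrix.mul_assoc]
  rw [hconj, trace_mul_comm, Matrix.mul_assoc, trace]
  simp only [diag_apply, diagonal_mul]

variable {c : ℝ} (htop : ∀ i : Fin n, (i : ℕ) < K → c ≤ eigDesc hA i)
  (htail : ∀ i : Fin n, K ≤ (i : ℕ) → eigDesc hA i < c)
include htop htail

theorem topEigSpace_le_range_topEigenvectors (hKn : K ≤ n) :
    topEigSpace hA K ≤ LinearMap.range (topEigenvectors hA hKn).mulVecLin := by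
  refine iSup_le fun i v hv => mem_range_topEigenvectors hA hKn fun m hm => ?_
  have hv' : A *ᵥ v = eigDesc hA i.1 • v := by
    simpa [sub_eq_zero] using hv
  exact sortedEigenvectors_transpose_mulVec_eq_zero hA hv'
    ((htail m hm).trans_le (htop i.1 i.2)).ne

/-- Equality case of Ky Fan's maximum principle. -/
theorem range_mulVecLin_le_of_sumTopEig_le (hKn : K ≤ n) {Z : Matrix (Fin n) (Fin K) ℝ}
    (hZ : Zᵀ * Z = 1) (h : sumTopEig hA K ≤ (Zᵀ * A * Z).trace) :
    LinearMap.range Z.mulVecLin ≤ LinearMap.range (topEigenvectors hA hKn).mulVecLin := by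
  set U := sortedEigenvectors hA
  set Q := Uᵀ * Z
  have hQ : Qᵀ * Q = 1 := by
    rw [transpose_mul, transpose_transpose, Matrix.mul_assoc, ← Matrix.mul_assoc U,
      sortedEigenvectors_mul_transpose_self, Matrix.one_mul, hZ]
  have hdiag : ∀ i, (Q * Qᵀ) i i = ∑ k, Q i k * Q i k := fun i => by simp [mul_apply]
  have hcard : (Finset.univ.filter fun i : Fin n => (i : ℕ) < K).card = K := by
    rw [Fin.card_filter_val_lt, min_eq_right hKn]
  have hweight : ∀ i : Fin n, K ≤ (i : ℕ) → (Q * Qᵀ) i i = 0 := fun i hi =>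
    eq_zero_of_sum_le_sum_mul (Finset.univ.filter fun i : Fin n => (i : ℕ) < K) (eigDesc hA)
      (fun i => (Q * Qᵀ) i i) c
      (fun i => hdiag i ▸ Finset.sum_nonneg fun k _ => mul_self_nonneg (Q i k))
      (diag_le_one_of_isIdempotentElem (by simp) (isIdempotentElem_mul_transpose_self hQ))
      (by rw [hcard]; exact (trace_mul_comm Q Qᵀ).trans (by rw [hQ, trace_one, Fintype.card_fin]))
      (fun i hi => htop i (Finset.mem_filter.mp hi).2)
      (fun i hi => htail i (by simpa using hi))
      (by rwa [Finset.sum_filter, ← sumTopEig, ← trace_transpose_mul_mul_eq_sum])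
      (by simpa using hi)
  rintro _ ⟨w, rfl⟩
  refine mem_range_topEigenvectors hA hKn fun i hi => ?_
  have hrow : ∀ k, Q i k = 0 := fun k =>
    (Finset.sum_eq_zero_iff_of_nonneg fun k _ => mul_self_nonneg (Q i k)).mp
      ((hdiag i).symm.trans (hweight i hi)) k (Finset.mem_univ k) |> mul_self_eq_zero.mp
  have hQw : Uᵀ *ᵥ Z.mulVecLin w = Q *ᵥ w := by rw [mulVecLin_apply, mulVec_mulVec]
  show (Uᵀ *ᵥ Z.mulVecLin w) i = 0
  rw [hQw]
  simp [mulVec, dotProduct, hrow]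

end EigenGap

/-- Step 3 of Theorem 2: if the top-`K` eigenspace `S` of `YYᵀ` is
contained in the column space of `X`, then for every normalized global minimizer
`(V*, W*)` of `(V, W) ↦ ‖XVW − Y‖_F²` with `(V*)ᵀXᵀXV* = I_K`, the Gram matrix
`ZZᵀ` of `Z = XV*` is the orthogonal projection onto `S`; in particular
`ZZᵀ = P Pᵀ` for any matrix `P` of orthonormal eigenvectors of `YYᵀ` associated with
its `K` largest eigenvalues. -/
theorem stmt_13 {N D C K : ℕ}
    (X : Matrix (Fin N) (Fin D) ℝ) (Y : Matrix (Fin N) (Fin C) ℝ)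
    (hK1 : 1 ≤ K) (hKN : K ≤ N)
    -- eigenvalue condition λ_K > Σ_{i>K} λ_i on the eigenvalues of YYᵀ
    (hgap : eigDesc (isHermitian_mult Y) ⟨K - 1, by omega⟩
          > sumTailEig (isHermitian_mult Y) K)
    -- the top-K eigenspace of YYᵀ is contained in the column space of X
    (hsub : topEigSpace (isHermitian_mult Y) K ≤ LinearMap.range X.mulVecLin) :
    ∀ (Vs : Matrix (Fin D) (Fin K) ℝ) (Ws : Matrix (Fin K) (Fin C) ℝ),
      (∀ (V : Matrix (Fin D) (Fin K) ℝ) (W : Matrix (Fin K) (Fin C) ℝ),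
        frobSq (X * Vs * Ws - Y) ≤ frobSq (X * V * W - Y)) →
      Vsᵀ * Xᵀ * X * Vs = 1 →
      -- ZZᵀ is symmetric, idempotent, with range the top-K eigenspace of YYᵀ:
      ((X * Vs) * (X * Vs)ᵀ)ᵀ = (X * Vs) * (X * Vs)ᵀ ∧
      ((X * Vs) * (X * Vs)ᵀ) * ((X * Vs) * (X * Vs)ᵀ) = (X * Vs) * (X * Vs)ᵀ ∧
      LinearMap.range (Matrix.mulVecLin ((X * Vs) * (X * Vs)ᵀ))
        = topEigSpace (isHermitian_mult Y) K ∧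
      -- and ZZᵀ = P Pᵀ for any orthonormal top-K eigenvector matrix P of YYᵀ:
      ∀ P : Matrix (Fin N) (Fin K) ℝ, Pᵀ * P = 1 →
        (∀ j : Fin K, (Y * Yᵀ) *ᵥ (fun i => P i j)
          = eigDesc (isHermitian_mult Y) (Fin.castLE hKN j) • (fun i => P i j)) →
        (X * Vs) * (X * Vs)ᵀ = P * Pᵀ := by
  intro Vs Ws hmin hnorm
  set hA := isHermitian_mult Y
  set P₀ := topEigenvectors hA hKN
  have hP₀ : P₀ᵀ * P₀ = 1 := topEigenvectors_transpose_mul_self hA hKN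
  have hZ : (X * Vs)ᵀ * (X * Vs) = 1 := by
    simpa only [transpose_mul, Matrix.mul_assoc] using hnorm
  have htop : ∀ i : Fin N, (i : ℕ) < K → eigDesc hA ⟨K - 1, by omega⟩ ≤ eigDesc hA i :=
    fun i hi => eigDesc_antitone hA (Fin.le_def.mpr (by simp only; omega))
  have htail : ∀ i : Fin N, K ≤ (i : ℕ) → eigDesc hA i < eigDesc hA ⟨K - 1, by omega⟩ :=
    fun i hi => eigDesc_lt_of_sumTailEig_lt hA
      (posSemidef_self_mul_conjTranspose Y).eigenvalues_nonneg hgap hi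
  have hS : topEigSpace hA K = LinearMap.range P₀.mulVecLin :=
    le_antisymm (topEigSpace_le_range_topEigenvectors hA htop htail hKN)
      (range_mulVecLin_le_topEigSpace hA hKN (mulVec_topEigenvectors_col hA hKN))
  obtain ⟨V₀, hV₀⟩ := exists_mul_eq_of_range_le (hS ▸ hsub)
  have htrace : sumTopEig hA K ≤ ((X * Vs)ᵀ * (Y * Yᵀ) * (X * Vs)).trace := by
    rw [← trace_transpose_mul_mul_eq_sumTopEig hA hKN hP₀ (mulVec_topEigenvectors_col hA hKN)]
    exact trace_le_of_frobSq_le hZ hP₀ (by simpa only [hV₀] using hmin V₀ (P₀ᵀ * Y))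
  have hZZ : (X * Vs) * (X * Vs)ᵀ = P₀ * P₀ᵀ := mul_transpose_self_eq_of_range_le hZ hP₀
    (range_mulVecLin_le_of_sumTopEig_le hA htop htail hKN hZ htrace)
  refine ⟨by rw [transpose_mul, transpose_transpose], isIdempotentElem_mul_transpose_self hZ,
    by rw [hZZ, range_mulVecLin_mul_transpose_self hP₀, hS], fun P hP hPeig => ?_⟩
  rw [hZZ]
  exact (mul_transpose_self_eq_of_range_le hP hP₀
    (hS ▸ range_mulVecLin_le_topEigSpace hA hKN hPeig)).symm

end
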